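/- Let W ⊂ H be a closed subspace, A ∈ B(H) boundedly invertible with c‖x‖ ≤ ‖Ax‖ ≤ d‖x‖ for all x ∈ H and some c, d > 0. Then for all x ∈ H: d^{-1}‖P_W A* x‖ ≤ ‖P_{AW} x‖ ≤ c^{-1}‖P_W A* x‖. -/

import Mathlib

/-! Writing `p = P_{AW} x` and `q = P_W A* x`, both bounds come from Cauchy–Schwarz:
`‖q‖² = ⟪A* x, q⟫ = ⟪x, A q⟫ = ⟪p, A q⟫ ≤ d ‖p‖ ‖q‖` since `A q ∈ AW`, and, writing `p = A w`
with `w ∈ W`, `‖p‖² = ⟪x, A w⟫ = ⟪A* x, w⟫ = ⟪q, w⟫ ≤ ‖q‖ ‖w‖ ≤ c⁻¹ ‖q‖ ‖p‖`. -/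

open ContinuousLinearMap

noncomputable def proj {H : Type*} [NormedAddCommGroup H] [InnerProductSpace ℂ H]
    (W : Submodule ℂ H) [CompleteSpace W] : H →L[ℂ] H :=
  W.subtypeL.comp (W.orthogonalProjection)

section

variable {𝕜 E F : Type*} [RCLike 𝕜]
  [NormedAddCommGroup E] [InnerProductSpace 𝕜 E] [NormedAddCommGroup F] [InnerProductSpace 𝕜 F]

local notation "⟪" x ", " y "⟫" => inner 𝕜 x y

theorem Submodule.inner_starProjection_eq_of_mem (K : Submodule 𝕜 E) [K.HasOrthogonalProjection]
    (x : E) {v : E} (hv : v ∈ K) : ⟪K.starProjection x, v⟫ = ⟪x, v⟫ := by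
  rw [K.inner_starProjection_left_eq_right, K.starProjection_eq_self_iff.mpr hv]

variable [CompleteSpace E] [CompleteSpace F]

theorem norm_starProjection_adjoint_le (T : E →L[𝕜] F) (U : Submodule 𝕜 E) (V : Submodule 𝕜 F)
    [U.HasOrthogonalProjection] [V.HasOrthogonalProjection] (hUV : U.map (T : E →ₗ[𝕜] F) ≤ V)
    (y : F) : ‖U.starProjection (adjoint T y)‖ ≤ ‖T‖ * ‖V.starProjection y‖ := by
  set q := U.starProjection (adjoint T y)
  set p := V.starProjection y
  have hq : q ∈ U := U.starProjection_apply_mem _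
  have hTq : T q ∈ V := hUV ⟨q, hq, rfl⟩
  have key : ‖q‖ * ‖q‖ ≤ ‖T‖ * ‖p‖ * ‖q‖ :=
    calc ‖q‖ * ‖q‖ = RCLike.re ⟪p, T q⟫ := by
          rw [← inner_self_eq_norm_mul_norm (𝕜 := 𝕜), U.inner_starProjection_eq_of_mem _ hq,
            adjoint_inner_left, V.inner_starProjection_eq_of_mem _ hTq]
      _ ≤ ‖p‖ * ‖T q‖ := re_inner_le_norm _ _
      _ ≤ ‖p‖ * (‖T‖ * ‖q‖) := by gcongr; exact T.le_opNorm q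
      _ = ‖T‖ * ‖p‖ * ‖q‖ := by ring
  rcases (norm_nonneg q).eq_or_lt with hq0 | hq0
  · rw [← hq0]
    positivity
  · exact le_of_mul_le_mul_right key hq0

theorem mul_norm_starProjection_map_le (T : E →L[𝕜] F) (U : Submodule 𝕜 E)
    [U.HasOrthogonalProjection] [(U.map (T : E →ₗ[𝕜] F)).HasOrthogonalProjection]
    {c : ℝ} (hc : 0 ≤ c) (hT : ∀ u ∈ U, c * ‖u‖ ≤ ‖T u‖) (y : F) :
    c * ‖(U.map (T : E →ₗ[𝕜] F)).starProjection y‖ ≤ ‖U.starProjection (adjoint T y)‖ := by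
  set q := U.starProjection (adjoint T y)
  set p := (U.map (T : E →ₗ[𝕜] F)).starProjection y
  have hp : p ∈ U.map (T : E →ₗ[𝕜] F) := Submodule.starProjection_apply_mem _ y
  obtain ⟨u, hu, hTu⟩ := id hp
  change T u = p at hTu
  have key : ‖p‖ * ‖p‖ ≤ ‖q‖ * ‖u‖ :=
    calc ‖p‖ * ‖p‖ = RCLike.re ⟪q, u⟫ := by
          rw [← inner_self_eq_norm_mul_norm (𝕜 := 𝕜),
            Submodule.inner_starProjection_eq_of_mem _ _ hp, ← hTu, ← adjoint_inner_left,
            ← U.inner_starProjection_eq_of_mem _ hu]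
      _ ≤ ‖q‖ * ‖u‖ := re_inner_le_norm _ _
  have hu_le : c * ‖u‖ ≤ ‖p‖ := hTu ▸ hT u hu
  have hcp : ‖p‖ * (c * ‖p‖) ≤ ‖p‖ * ‖q‖ :=
    calc ‖p‖ * (c * ‖p‖) = c * (‖p‖ * ‖p‖) := by ring
      _ ≤ c * (‖q‖ * ‖u‖) := by gcongr
      _ = ‖q‖ * (c * ‖u‖) := by ring
      _ ≤ ‖q‖ * ‖p‖ := by gcongr
      _ = ‖p‖ * ‖q‖ := by ring
  rcases (norm_nonneg p).eq_or_lt with hp0 | hp0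
  · rw [← hp0, mul_zero]
    exact norm_nonneg q
  · exact le_of_mul_le_mul_left hcp hp0

end

theorem proj_eq_starProjection {H : Type*} [NormedAddCommGroup H] [InnerProductSpace ℂ H]
    (W : Submodule ℂ H) [CompleteSpace W] : proj W = W.starProjection :=
  rfl

/-- If `W ⊂ H` is a closed subspace and `A ∈ B(H)` is boundedly invertible with
`c‖x‖ ≤ ‖Ax‖ ≤ d‖x‖` for all `x`, then
`d⁻¹ ‖P_W A* x‖ ≤ ‖P_{AW} x‖ ≤ c⁻¹ ‖P_W A* x‖` for all `x ∈ H`. -/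
theorem proj_map_norm_bounds {H : Type*} [NormedAddCommGroup H] [InnerProductSpace ℂ H]
    [CompleteSpace H] (W : Submodule ℂ H) [CompleteSpace W]
    (A : H ≃L[ℂ] H) [CompleteSpace (W.map ((A : H →L[ℂ] H) : H →ₗ[ℂ] H))]
    (c d : ℝ) (hc : 0 < c) (hd : 0 < d)
    (hA : ∀ x : H, c * ‖x‖ ≤ ‖A x‖ ∧ ‖A x‖ ≤ d * ‖x‖) :
    ∀ x : H,
      d⁻¹ * ‖proj W (adjoint (A : H →L[ℂ] H) x)‖ ≤ ‖proj (W.map ((A : H →L[ℂ] H) : H →ₗ[ℂ] H)) x‖ ∧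
      ‖proj (W.map ((A : H →L[ℂ] H) : H →ₗ[ℂ] H)) x‖ ≤ c⁻¹ * ‖proj W (adjoint (A : H →L[ℂ] H) x)‖ := by
  intro x
  have hA_norm : ‖(A : H →L[ℂ] H)‖ ≤ d := opNorm_le_bound _ hd.le fun x ↦ (hA x).2
  have lower := norm_starProjection_adjoint_le (A : H →L[ℂ] H) W _ le_rfl x
  have upper := mul_norm_starProjection_map_le (A : H →L[ℂ] H) W hc.le (fun w _ ↦ (hA w).1) x
  simp only [proj_eq_starProjection]
  constructor
  · rw [inv_mul_le_iff₀ hd]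
    exact lower.trans (by gcongr)
  · rwa [le_inv_mul_iff₀ hc]
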